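/- Let n ≥ 2, ν > 0, and ⟨x⟩ = (1 + |x|²)^{1/2}. Define J_ν(x, ρ) = ∫_{S^{n−1}} ⟨x − ρθ⟩^{−ν} dS(θ). Then there is a constant C depending only on n and ν such that: if ν < n − 1, then J_ν(x, ρ) ≤ C ⟨ρ + |x|⟩^{−ν} for all x ∈ ℝ^n and ρ ≥ 0; and if ν = n − 1, then J_ν(x, ρ) ≤ C ⟨ρ + |x|⟩^{−ν} log(2⟨ρ⟩ + |x|) for all x ∈ ℝ^n and ρ ≥ 0. -/

import Mathlib

/-!
Write `x = ‖x‖ e` with `e` a unit vector. For `θ` on the sphere,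
`1 + ‖x - ρθ‖² = A + B ‖θ - e‖²` with `A = 1 + (ρ - ‖x‖)²` and `B = ρ‖x‖`, so the integrand only
depends on the distance from `θ` to `e`. The dyadic shells `2⁻ᵏ < ‖θ - e‖ ≤ 2¹⁻ᵏ` have measure
`O(2^{-k(n-1)})`, since the cone over such a cap lies in `O(2ᵏ)` balls of radius `2¹⁻ᵏ`; hence
`J_ν ≲ ∑ₖ 2^{-k(n-1)} (A + 4⁻ᵏ B)^{-ν/2}`. As `A + 4⁻ᵏ B ≥ 4⁻ᵏ (A + B)` and
`A + B ≍ ⟨ρ + ‖x‖⟩²`, this series is geometric with ratio `2^{ν-(n-1)}` when `ν < n - 1`. When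
`ν = n - 1` its terms are at most `(A + B)^{-ν/2}` for the first `O(log (A + B))` indices and
geometric afterwards, which produces the logarithm.
-/

open MeasureTheory Metric Set
open scoped ENNReal NNReal

noncomputable section

/-- The surface measure on the unit sphere of `ℝⁿ`. -/
def sphereMeasure (n : ℕ) : Measure (sphere (0 : EuclideanSpace ℝ (Fin n)) 1) :=
  (volume : Measure (EuclideanSpace ℝ (Fin n))).toSphere

/-- `J_ν(x, ρ) = ∫_{S^{n-1}} ⟨x - ρθ⟩^{-ν} dS(θ)`, where `⟨z⟩ = (1 + |z|²)^{1/2}`. -/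
def Jnu (n : ℕ) (ν : ℝ) (x : EuclideanSpace ℝ (Fin n)) (ρ : ℝ) : ℝ :=
  ∫ θ : sphere (0 : EuclideanSpace ℝ (Fin n)) 1,
    (1 + ‖x - ρ • (θ : EuclideanSpace ℝ (Fin n))‖ ^ 2) ^ (-ν / 2) ∂(sphereMeasure n)

open Filter Topology
open scoped Pointwise

theorem Ioo_smul_subset_iUnion_ball {E : Type*} [NormedAddCommGroup E] [NormedSpace ℝ E]
    {e : E} (he : ‖e‖ = 1) {d : ℝ} (hd : 0 < d) {s : Set E} (hs : s ⊆ closedBall e d) :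
    Ioo (0 : ℝ) 1 • s ⊆ ⋃ k ∈ Finset.range (⌈1 / d⌉₊ + 1), ball (((k : ℝ) * d) • e) (2 * d) := by
  rintro _ ⟨r, ⟨hr0, hr1⟩, y, hy, rfl⟩
  set k := ⌊r / d⌋₊
  have hk : k ∈ Finset.range (⌈1 / d⌉₊ + 1) :=
    Finset.mem_range_succ_iff.mpr <| (Nat.floor_le_ceil _).trans <|
      Nat.ceil_mono <| div_le_div_of_nonneg_right hr1.le hd.le
  refine mem_biUnion hk ?_
  have hy_e : dist (r • y) (r • e) < d := by
    rw [dist_smul₀, Real.norm_of_nonneg hr0.le]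
    calc r * dist y e ≤ r * d := by gcongr; exact hs hy
      _ < d := by nlinarith
  have he_k : dist (r • e) (((k : ℝ) * d) • e) < d := by
    rw [dist_eq_norm, ← sub_smul, norm_smul, he, mul_one, Real.norm_eq_abs,
      abs_of_nonneg (sub_nonneg.mpr ((le_div_iff₀ hd).mp (Nat.floor_le (by positivity))))]
    linarith [(div_lt_iff₀ hd).mp (Nat.lt_floor_add_one (r / d))]
  rw [mem_ball]
  linarith [dist_triangle (r • y) (r • e) (((k : ℝ) * d) • e)]

theorem exists_sphereMeasure_cap_le (n : ℕ) :
    ∃ C : ℝ, 0 ≤ C ∧ ∀ e : EuclideanSpace ℝ (Fin n), ‖e‖ = 1 → ∀ d : ℝ, 0 < d → d ≤ 2 →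
      sphereMeasure n {θ | ‖(θ : EuclideanSpace ℝ (Fin n)) - e‖ ≤ d}
        ≤ ENNReal.ofReal (C * d ^ ((n : ℝ) - 1)) := by
  set V := (volume (ball (0 : EuclideanSpace ℝ (Fin n)) 1)).toReal with hV_def
  refine ⟨n * 5 * 2 ^ n * V, by positivity, fun e he d hd0 hd2 => ?_⟩
  have : Nontrivial (EuclideanSpace ℝ (Fin n)) := ⟨⟨e, 0, by rintro rfl; simp at he⟩⟩
  set s := {θ : sphere (0 : EuclideanSpace ℝ (Fin n)) 1 |
    ‖(θ : EuclideanSpace ℝ (Fin n)) - e‖ ≤ d}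
  have hs : MeasurableSet s :=
    (isClosed_le (continuous_subtype_val.sub continuous_const).norm continuous_const).measurableSet
  set K := ⌈1 / d⌉₊
  have hcone : volume (Ioo (0 : ℝ) 1 • ((↑) '' s : Set (EuclideanSpace ℝ (Fin n))))
      ≤ ENNReal.ofReal ((K + 1) * (2 * d) ^ n * V) := by
    calc _ ≤ volume (⋃ k ∈ Finset.range (K + 1), ball (((k : ℝ) * d) • e) (2 * d)) :=
          measure_mono <| Ioo_smul_subset_iUnion_ball he hd0 <| by
            rintro _ ⟨θ, hθ, rfl⟩; exact mem_closedBall_iff_norm.mpr hθ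
      _ ≤ ∑ k ∈ Finset.range (K + 1), volume (ball (((k : ℝ) * d) • e) (2 * d)) :=
          measure_biUnion_finset_le _ _
      _ = ENNReal.ofReal ((K + 1) * (2 * d) ^ n * V) := by
          simp_rw [Measure.addHaar_ball volume _ (by positivity : (0 : ℝ) ≤ 2 * d),
            finrank_euclideanSpace_fin, Finset.sum_const, Finset.card_range, nsmul_eq_mul]
          rw [ENNReal.ofReal_mul (by positivity), ENNReal.ofReal_mul (by positivity), hV_def,
            ENNReal.ofReal_toReal measure_ball_lt_top.ne, ← ENNReal.ofReal_natCast, mul_assoc]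
          norm_cast
  have hK : (K + 1 : ℝ) * (2 * d) ^ n ≤ 5 * 2 ^ n * d ^ ((n : ℝ) - 1) := by
    have hK1 : (K : ℝ) + 1 ≤ 1 / d + 2 := by
      linarith [Nat.ceil_lt_add_one (by positivity : 0 ≤ 1 / d)]
    rw [Real.rpow_sub_one hd0.ne', Real.rpow_natCast, mul_pow]
    calc (K + 1 : ℝ) * (2 ^ n * d ^ n) ≤ (1 / d + 2) * (2 ^ n * d ^ n) := by gcongr
      _ = 2 ^ n * (d ^ n / d) * (1 + 2 * d) := by field_simp
      _ ≤ 5 * 2 ^ n * (d ^ n / d) := by nlinarith [show 0 ≤ 2 ^ n * (d ^ n / d) by positivity]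
  calc sphereMeasure n s
      = n * volume (Ioo (0 : ℝ) 1 • ((↑) '' s : Set (EuclideanSpace ℝ (Fin n)))) := by
        rw [sphereMeasure, Measure.toSphere_apply' _ hs, finrank_euclideanSpace_fin]
    _ ≤ n * ENNReal.ofReal ((K + 1) * (2 * d) ^ n * V) := by gcongr
    _ ≤ ENNReal.ofReal (n * 5 * 2 ^ n * V * d ^ ((n : ℝ) - 1)) := by
        rw [← ENNReal.ofReal_natCast, ← ENNReal.ofReal_mul (by positivity)]
        refine ENNReal.ofReal_le_ofReal ?_
        have hV : 0 ≤ V := ENNReal.toReal_nonneg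
        calc (n : ℝ) * ((K + 1) * (2 * d) ^ n * V) = n * V * ((K + 1) * (2 * d) ^ n) := by ring
          _ ≤ n * V * (5 * 2 ^ n * d ^ ((n : ℝ) - 1)) := by gcongr
          _ = _ := by ring

section Dyadic

variable {X : Type*} [MeasurableSpace X] {μ : Measure X} {φ : X → ℝ}

theorem measure_setOf_le_zero_eq_zero_of_le_rpow {C m : ℝ} (hm : 0 < m)
    (hcap : ∀ d : ℝ, 0 < d → d ≤ 2 → μ {x | φ x ≤ d} ≤ ENNReal.ofReal (C * d ^ m)) :
    μ {x | φ x ≤ 0} = 0 := by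
  have hlim : Tendsto (fun d : ℝ => ENNReal.ofReal (C * d ^ m)) (𝓝[>] 0) (𝓝 0) := by
    have hcont : Continuous fun d : ℝ => ENNReal.ofReal (C * d ^ m) :=
      ENNReal.continuous_ofReal.comp (continuous_const.mul (Real.continuous_rpow_const hm.le))
    simpa [Real.zero_rpow hm.ne'] using (hcont.tendsto 0).mono_left nhdsWithin_le_nhds
  refine le_antisymm (ge_of_tendsto hlim ?_) zero_le
  filter_upwards [Ioc_mem_nhdsGT (show (0 : ℝ) < 2 by norm_num)] with d hd
  exact (measure_mono fun x (hx : φ x ≤ 0) => hx.trans hd.1.le).trans (hcap d hd.1 hd.2)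

theorem exists_dyadic_shell {t : ℝ} (ht0 : 0 < t) (ht2 : t ≤ 2) :
    ∃ k : ℕ, (1 / 2 : ℝ) ^ k < t ∧ t ≤ 2 * (1 / 2) ^ k := by
  obtain ⟨k, hk, hk'⟩ := exists_nat_pow_near (x := 2 / t) (y := (2 : ℝ))
    (by rw [le_div_iff₀ ht0]; linarith) one_lt_two
  rw [le_div_iff₀ ht0] at hk
  rw [div_lt_iff₀ ht0, pow_succ] at hk'
  refine ⟨k, ?_, ?_⟩
  · rw [one_div_pow, div_lt_iff₀ (by positivity)]
    linarith
  · rw [one_div_pow, mul_one_div, le_div_iff₀ (by positivity)]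
    linarith

theorem lintegral_comp_le_tsum_dyadic (hφ : Measurable φ) (hφ2 : ∀ x, φ x ≤ 2)
    (hnull : μ {x | φ x ≤ 0} = 0) {g : ℝ → ℝ≥0∞} (hg : AntitoneOn g (Ioi 0)) :
    ∫⁻ x, g (φ x) ∂μ ≤ ∑' k : ℕ, g ((1 / 2) ^ k) * μ {x | φ x ≤ 2 * (1 / 2) ^ k} := by
  set S : ℕ → Set X := fun k => {x | φ x ≤ 2 * (1 / 2 : ℝ) ^ k}
  have hS : ∀ k, MeasurableSet (S k) := fun k => measurableSet_le hφ measurable_const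
  have hpos : ∀ᵐ x ∂μ, 0 < φ x := by
    simpa only [ae_iff, not_lt] using hnull
  calc ∫⁻ x, g (φ x) ∂μ ≤ ∫⁻ x, ∑' k : ℕ, (S k).indicator (fun _ => g ((1 / 2) ^ k)) x ∂μ := by
        refine lintegral_mono_ae ?_
        filter_upwards [hpos] with x hx
        obtain ⟨k, hk, hk'⟩ := exists_dyadic_shell hx (hφ2 x)
        calc g (φ x) ≤ g ((1 / 2) ^ k) := hg (by simp) hx hk.le
          _ = (S k).indicator (fun _ => g ((1 / 2) ^ k)) x :=
            (indicator_of_mem (show x ∈ S k from hk') fun _ => g ((1 / 2) ^ k)).symm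
          _ ≤ _ := ENNReal.le_tsum k
    _ = ∑' k : ℕ, g ((1 / 2) ^ k) * μ (S k) := by
        rw [lintegral_tsum fun k => (measurable_const.indicator (hS k)).aemeasurable]
        simp_rw [lintegral_indicator_const (hS _)]

end Dyadic

section DyadicSeries

/-- The measure bound of the `k`-th dyadic shell around `e` times the largest value of
`(A + B ‖θ - e‖²)^{-ν/2}` on it, with `m = n - 1`. -/
def dyadicTerm (m ν A B : ℝ) (k : ℕ) : ℝ :=
  (2 * (1 / 2 : ℝ) ^ k) ^ m * (A + B * ((1 / 2 : ℝ) ^ k) ^ 2) ^ (-ν / 2)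

variable {m ν A B : ℝ}

theorem dyadicTerm_nonneg (hA : 0 ≤ A) (hB : 0 ≤ B) (k : ℕ) : 0 ≤ dyadicTerm m ν A B k :=
  mul_nonneg (by positivity) (Real.rpow_nonneg (add_nonneg hA (mul_nonneg hB (by positivity))) _)

theorem dyadicTerm_le_geometric (hν : 0 ≤ ν) (hA : 1 ≤ A) (hB : 0 ≤ B) (k : ℕ) :
    dyadicTerm m ν A B k ≤ 2 ^ m * ((1 / 2) ^ m) ^ k := by
  have h1 : (A + B * ((1 / 2 : ℝ) ^ k) ^ 2) ^ (-ν / 2) ≤ 1 :=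
    Real.rpow_le_one_of_one_le_of_nonpos
      (le_add_of_le_of_nonneg hA (mul_nonneg hB (by positivity))) (by linarith)
  calc dyadicTerm m ν A B k ≤ (2 * (1 / 2 : ℝ) ^ k) ^ m * 1 :=
        mul_le_mul_of_nonneg_left h1 (by positivity)
    _ = 2 ^ m * ((1 / 2) ^ m) ^ k := by
        rw [mul_one, Real.mul_rpow (by norm_num) (by positivity), Real.rpow_pow_comm (by norm_num)]

theorem summable_dyadicTerm (hm : 0 < m) (hν : 0 ≤ ν) (hA : 1 ≤ A) (hB : 0 ≤ B) :
    Summable (dyadicTerm m ν A B) :=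
  Summable.of_nonneg_of_le (dyadicTerm_nonneg (by linarith) hB) (dyadicTerm_le_geometric hν hA hB)
    ((summable_geometric_of_lt_one (by positivity)
      (Real.rpow_lt_one (by norm_num) (by norm_num) hm)).mul_left _)

theorem dyadicTerm_le_mul_geometric (hA : 0 < A) (hB : 0 ≤ B) (hν : 0 ≤ ν) (k : ℕ) :
    dyadicTerm m ν A B k ≤ 2 ^ m * (A + B) ^ (-ν / 2) * (2 ^ (ν - m)) ^ k := by
  set s : ℝ := (1 / 2) ^ k
  have hs0 : 0 < s := by positivity
  have hs1 : s ^ 2 ≤ 1 := pow_le_one₀ hs0.le (pow_le_one₀ (by norm_num) (by norm_num))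
  have hbase : s ^ 2 * (A + B) ≤ A + B * s ^ 2 := by
    nlinarith [mul_le_mul_of_nonneg_right hs1 hA.le]
  have hshell : (A + B * s ^ 2) ^ (-ν / 2) ≤ s ^ (-ν) * (A + B) ^ (-ν / 2) := by
    calc (A + B * s ^ 2) ^ (-ν / 2) ≤ (s ^ 2 * (A + B)) ^ (-ν / 2) :=
          Real.rpow_le_rpow_of_nonpos (by positivity) hbase (by linarith)
      _ = s ^ (-ν) * (A + B) ^ (-ν / 2) := by
          rw [Real.mul_rpow (by positivity) (by linarith), ← Real.rpow_natCast_mul hs0.le]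
          congr 2
          ring
  have hratio : (2 * s) ^ m * s ^ (-ν) = 2 ^ m * (2 ^ (ν - m)) ^ k := by
    rw [Real.mul_rpow (by norm_num) hs0.le, mul_assoc, ← Real.rpow_add hs0,
      ← Real.rpow_pow_comm (by norm_num), one_div, Real.inv_rpow (by norm_num),
      ← Real.rpow_neg (by norm_num), neg_add', neg_sub_neg]
  calc dyadicTerm m ν A B k = (2 * s) ^ m * (A + B * s ^ 2) ^ (-ν / 2) := rfl
    _ ≤ (2 * s) ^ m * (s ^ (-ν) * (A + B) ^ (-ν / 2)) := by gcongr
    _ = 2 ^ m * (A + B) ^ (-ν / 2) * (2 ^ (ν - m)) ^ k := by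
        rw [← mul_assoc, hratio]
        ring

theorem tsum_dyadicTerm_le_of_lt (hν : 0 ≤ ν) (hνm : ν < m) (hA : 0 < A) (hB : 0 ≤ B) :
    ∑' k, dyadicTerm m ν A B k ≤ 2 ^ m * (1 - 2 ^ (ν - m))⁻¹ * (A + B) ^ (-ν / 2) := by
  have hq0 : (0 : ℝ) ≤ 2 ^ (ν - m) := by positivity
  have hq1 : (2 : ℝ) ^ (ν - m) < 1 := Real.rpow_lt_one_of_one_lt_of_neg one_lt_two (by linarith)
  have hgeom : Summable fun k : ℕ => 2 ^ m * (A + B) ^ (-ν / 2) * (2 ^ (ν - m)) ^ k :=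
    (summable_geometric_of_lt_one hq0 hq1).mul_left _
  calc ∑' k, dyadicTerm m ν A B k
      ≤ ∑' k : ℕ, 2 ^ m * (A + B) ^ (-ν / 2) * (2 ^ (ν - m)) ^ k :=
        Summable.tsum_le_tsum (dyadicTerm_le_mul_geometric hA hB hν)
          (Summable.of_nonneg_of_le (dyadicTerm_nonneg hA.le hB)
            (dyadicTerm_le_mul_geometric hA hB hν) hgeom) hgeom
    _ = 2 ^ m * (1 - 2 ^ (ν - m))⁻¹ * (A + B) ^ (-ν / 2) := by
        rw [tsum_mul_left, tsum_geometric_of_lt_one hq0 hq1]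
        ring

theorem tsum_le_of_le_min_geometric {a : ℕ → ℝ} {M x q : ℝ} (ha : ∀ k, 0 ≤ a k)
    (hax : ∀ k, a k ≤ M * x) (haq : ∀ k, a k ≤ M * q ^ k) (hq0 : 0 < q) (hq1 : q < 1)
    (hx0 : 0 < x) (hx1 : x ≤ 1) :
    ∑' k, a k ≤ M * x * (Real.logb q x + 1 + (1 - q)⁻¹) := by
  have hMx : 0 ≤ M * x := (ha 0).trans (hax 0)
  have hM : 0 ≤ M := nonneg_of_mul_nonneg_left hMx hx0
  have hgeom : Summable fun k => q ^ k := summable_geometric_of_lt_one hq0.le hq1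
  have hsum : Summable a := Summable.of_nonneg_of_le ha haq (hgeom.mul_left M)
  set K := ⌈Real.logb q x⌉₊
  have hK : (K : ℝ) ≤ Real.logb q x + 1 :=
    (Nat.ceil_lt_add_one (Real.logb_nonneg_of_base_lt_one hq0 hq1 hx0 hx1)).le
  have hqK : q ^ K ≤ x :=
    calc q ^ K = q ^ (K : ℝ) := (Real.rpow_natCast q K).symm
      _ ≤ q ^ Real.logb q x := Real.rpow_le_rpow_of_exponent_ge hq0 hq1.le (Nat.le_ceil _)
      _ = x := Real.rpow_logb hq0 hq1.ne hx0
  have hhead : ∑ k ∈ Finset.range K, a k ≤ K * (M * x) := by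
    simpa using Finset.sum_le_sum fun k (_ : k ∈ Finset.range K) => hax k
  have htail : ∑' k, a (k + K) ≤ M * x * (1 - q)⁻¹ :=
    calc ∑' k, a (k + K) ≤ ∑' k, M * q ^ K * q ^ k :=
          Summable.tsum_le_tsum (fun k => (haq _).trans_eq (by ring))
            ((summable_nat_add_iff K).mpr hsum) (hgeom.mul_left _)
      _ = M * q ^ K * (1 - q)⁻¹ := by rw [tsum_mul_left, tsum_geometric_of_lt_one hq0.le hq1]
      _ ≤ M * x * (1 - q)⁻¹ := by gcongr
  rw [← hsum.sum_add_tsum_nat_add K]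
  calc ∑ k ∈ Finset.range K, a k + ∑' k, a (k + K) ≤ K * (M * x) + M * x * (1 - q)⁻¹ :=
        add_le_add hhead htail
    _ ≤ (Real.logb q x + 1) * (M * x) + M * x * (1 - q)⁻¹ := by gcongr
    _ = M * x * (Real.logb q x + 1 + (1 - q)⁻¹) := by ring

theorem tsum_dyadicTerm_self_le (hm : 0 < m) (hA : 1 ≤ A) (hB : 0 ≤ B) :
    ∑' k, dyadicTerm m m A B k ≤ 2 ^ m * (A + B) ^ (-m / 2) *
      (Real.log (A + B) / (2 * Real.log 2) + 1 + (1 - (1 / 2) ^ m)⁻¹) := by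
  have hA0 : 0 < A := by linarith
  have hAB : 1 ≤ A + B := by linarith
  have hlogb : Real.logb ((1 / 2) ^ m) ((A + B) ^ (-m / 2))
      = Real.log (A + B) / (2 * Real.log 2) := by
    rw [Real.logb, Real.log_rpow (by linarith), Real.log_rpow (by norm_num), one_div,
      Real.log_inv]
    field_simp
  rw [← hlogb]
  refine tsum_le_of_le_min_geometric (dyadicTerm_nonneg hA0.le hB) (fun k => ?_)
    (dyadicTerm_le_geometric hm.le hA hB) (by positivity)
    (Real.rpow_lt_one (by norm_num) (by norm_num) hm) (Real.rpow_pos_of_pos (by linarith) _)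
    (Real.rpow_le_one_of_one_le_of_nonpos hAB (by linarith : -m / 2 ≤ 0))
  simpa using dyadicTerm_le_mul_geometric (m := m) hA0 hB hm.le k

end DyadicSeries

theorem norm_smul_sub_smul_sq {E : Type*} [NormedAddCommGroup E] [InnerProductSpace ℝ E]
    {e θ : E} (he : ‖e‖ = 1) (hθ : ‖θ‖ = 1) (r ρ : ℝ) :
    ‖r • e - ρ • θ‖ ^ 2 = (ρ - r) ^ 2 + ρ * r * ‖θ - e‖ ^ 2 := by
  rw [norm_sub_sq_real, norm_sub_sq_real, norm_smul, norm_smul, real_inner_smul_left,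
    real_inner_smul_right, he, hθ, real_inner_comm, Real.norm_eq_abs, Real.norm_eq_abs]
  nlinarith [sq_abs r, sq_abs ρ]

theorem integral_sphereMeasure_le_tsum_dyadicTerm {n : ℕ} (hn : 2 ≤ n) {C : ℝ} (hC : 0 ≤ C)
    {e : EuclideanSpace ℝ (Fin n)} (he : ‖e‖ = 1)
    (hcap : ∀ d : ℝ, 0 < d → d ≤ 2 →
      sphereMeasure n {θ | ‖(θ : EuclideanSpace ℝ (Fin n)) - e‖ ≤ d}
        ≤ ENNReal.ofReal (C * d ^ ((n : ℝ) - 1)))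
    {ν A B : ℝ} (hν : 0 ≤ ν) (hA : 1 ≤ A) (hB : 0 ≤ B) :
    ∫ θ, (A + B * ‖(θ : EuclideanSpace ℝ (Fin n)) - e‖ ^ 2) ^ (-ν / 2) ∂sphereMeasure n
      ≤ C * ∑' k, dyadicTerm ((n : ℝ) - 1) ν A B k := by
  set g : ℝ → ℝ := fun t => (A + B * t ^ 2) ^ (-ν / 2)
  have hbase : ∀ t, 0 < A + B * t ^ 2 := fun t => by positivity
  have hg : AntitoneOn (fun t => ENNReal.ofReal (g t)) (Ioi 0) := fun a ha b _ hab =>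
    ENNReal.ofReal_le_ofReal <|
      Real.rpow_le_rpow_of_nonpos (hbase a) (by gcongr; exact ha.le) (by linarith)
  have hm : 0 < (n : ℝ) - 1 := by
    have : (2 : ℝ) ≤ n := by exact_mod_cast hn
    linarith
  have hφ : Continuous fun θ : sphere (0 : EuclideanSpace ℝ (Fin n)) 1 =>
      ‖(θ : EuclideanSpace ℝ (Fin n)) - e‖ :=
    (continuous_subtype_val.sub continuous_const).norm
  have hφ2 (θ : sphere (0 : EuclideanSpace ℝ (Fin n)) 1) :
      ‖(θ : EuclideanSpace ℝ (Fin n)) - e‖ ≤ 2 :=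
    (norm_sub_le _ _).trans (by rw [he, mem_sphere_zero_iff_norm.mp θ.2]; norm_num)
  have hterm (k : ℕ) : 0 ≤ C * dyadicTerm ((n : ℝ) - 1) ν A B k :=
    mul_nonneg hC (dyadicTerm_nonneg (by linarith) hB k)
  have hlint : ∫⁻ θ, ENNReal.ofReal (g ‖(θ : EuclideanSpace ℝ (Fin n)) - e‖) ∂sphereMeasure n
      ≤ ENNReal.ofReal (C * ∑' k, dyadicTerm ((n : ℝ) - 1) ν A B k) :=
    calc _ ≤ ∑' k : ℕ, ENNReal.ofReal (g ((1 / 2) ^ k)) *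
          sphereMeasure n {θ | ‖(θ : EuclideanSpace ℝ (Fin n)) - e‖ ≤ 2 * (1 / 2) ^ k} :=
          lintegral_comp_le_tsum_dyadic hφ.measurable hφ2
            (measure_setOf_le_zero_eq_zero_of_le_rpow hm hcap) hg
      _ ≤ ∑' k : ℕ, ENNReal.ofReal (C * dyadicTerm ((n : ℝ) - 1) ν A B k) := by
          gcongr with k
          refine (mul_le_mul_right (hcap _ (by positivity) ?_) _).trans_eq ?_
          · linarith [pow_le_one₀ (by norm_num : (0 : ℝ) ≤ 1 / 2) (by norm_num) (n := k)]
          · rw [← ENNReal.ofReal_mul (Real.rpow_nonneg (hbase _).le _), dyadicTerm]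
            ring_nf
      _ = ENNReal.ofReal (C * ∑' k, dyadicTerm ((n : ℝ) - 1) ν A B k) := by
          rw [← tsum_mul_left, ENNReal.ofReal_tsum_of_nonneg hterm
            ((summable_dyadicTerm hm hν hA hB).mul_left C)]
  rw [integral_eq_lintegral_of_nonneg_ae
    (Eventually.of_forall fun θ => Real.rpow_nonneg (hbase _).le _)
    ((((hφ.measurable.pow_const 2).const_mul B).const_add A).pow_const _).aestronglyMeasurable]
  exact ENNReal.toReal_le_of_le_ofReal (by simpa only [tsum_mul_left] using tsum_nonneg hterm) hlint

theorem exists_Jnu_le_tsum_dyadicTerm {n : ℕ} (hn : 2 ≤ n) {ν : ℝ} (hν : 0 ≤ ν) :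
    ∃ C : ℝ, 0 ≤ C ∧ ∀ (x : EuclideanSpace ℝ (Fin n)) (ρ : ℝ), 0 ≤ ρ →
      Jnu n ν x ρ ≤ C * ∑' k, dyadicTerm ((n : ℝ) - 1) ν (1 + (ρ - ‖x‖) ^ 2) (ρ * ‖x‖) k := by
  obtain ⟨C, hC, hcap⟩ := exists_sphereMeasure_cap_le n
  refine ⟨C, hC, fun x ρ hρ => ?_⟩
  obtain ⟨e, he, hxe⟩ : ∃ e : EuclideanSpace ℝ (Fin n), ‖e‖ = 1 ∧ ‖x‖ • e = x := by
    rcases eq_or_ne x 0 with rfl | hx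
    · exact ⟨EuclideanSpace.single ⟨0, by omega⟩ 1, by simp, by simp⟩
    · exact ⟨‖x‖⁻¹ • x, norm_smul_inv_norm hx, smul_inv_smul₀ (norm_ne_zero_iff.mpr hx) x⟩
  have hJ : Jnu n ν x ρ = ∫ θ, (1 + (ρ - ‖x‖) ^ 2 + ρ * ‖x‖ *
      ‖(θ : EuclideanSpace ℝ (Fin n)) - e‖ ^ 2) ^ (-ν / 2) ∂sphereMeasure n := by
    refine integral_congr_ae (Eventually.of_forall fun θ => ?_)
    have h := norm_smul_sub_smul_sq he (mem_sphere_zero_iff_norm.mp θ.2) ‖x‖ ρ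
    rw [hxe] at h
    dsimp only
    rw [h, add_assoc]
  rw [hJ]
  exact integral_sphereMeasure_le_tsum_dyadicTerm hn hC he (hcap e he) hν
    (le_add_of_nonneg_right (sq_nonneg _)) (mul_nonneg hρ (norm_nonneg x))

theorem one_add_sub_sq_add_mul_rpow_le {ν : ℝ} (hν : 0 ≤ ν) (ρ r : ℝ) :
    (1 + (ρ - r) ^ 2 + ρ * r) ^ (-ν / 2) ≤ 2 ^ ν * (1 + (ρ + r) ^ 2) ^ (-ν / 2) := by
  calc (1 + (ρ - r) ^ 2 + ρ * r) ^ (-ν / 2) ≤ ((1 + (ρ + r) ^ 2) / 2 ^ 2) ^ (-ν / 2) :=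
        Real.rpow_le_rpow_of_nonpos (by positivity) (by nlinarith [sq_nonneg (ρ - r)])
          (by linarith)
    _ = 2 ^ ν * (1 + (ρ + r) ^ 2) ^ (-ν / 2) := by
        rw [Real.div_rpow (by positivity) (by positivity), ← Real.rpow_natCast_mul (by norm_num),
          div_eq_mul_inv, ← Real.rpow_neg (by norm_num), mul_comm]
        congr 2
        push_cast
        ring

theorem two_le_two_mul_rpow_add {ρ r : ℝ} (hr : 0 ≤ r) :
    2 ≤ 2 * (1 + ρ ^ 2) ^ ((1 : ℝ) / 2) + r := by
  have : 1 ≤ (1 + ρ ^ 2) ^ ((1 : ℝ) / 2) :=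
    Real.one_le_rpow (le_add_of_nonneg_right (sq_nonneg ρ)) (by norm_num)
  linarith

theorem log_one_add_sub_sq_add_mul_le {ρ r : ℝ} (hρ : 0 ≤ ρ) (hr : 0 ≤ r) :
    Real.log (1 + (ρ - r) ^ 2 + ρ * r) ≤ 2 * Real.log (2 * (1 + ρ ^ 2) ^ ((1 : ℝ) / 2) + r) := by
  rw [← Real.sqrt_eq_rpow]
  have hs := Real.sq_sqrt (by positivity : (0 : ℝ) ≤ 1 + ρ ^ 2)
  calc Real.log (1 + (ρ - r) ^ 2 + ρ * r) ≤ Real.log ((2 * √(1 + ρ ^ 2) + r) ^ 2) :=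
        Real.log_le_log (by nlinarith [mul_nonneg hρ hr]) (by
          nlinarith [Real.sqrt_nonneg (1 + ρ ^ 2), mul_nonneg hρ hr,
            mul_nonneg (Real.sqrt_nonneg (1 + ρ ^ 2)) hr])
    _ = 2 * Real.log (2 * √(1 + ρ ^ 2) + r) := by
        rw [Real.log_pow]
        norm_num

theorem log_div_add_le_mul_log {ρ r c : ℝ} (hρ : 0 ≤ ρ) (hr : 0 ≤ r) (hc : 0 ≤ c) :
    Real.log (1 + (ρ - r) ^ 2 + ρ * r) / (2 * Real.log 2) + 1 + c
      ≤ (2 + c) / Real.log 2 * Real.log (2 * (1 + ρ ^ 2) ^ ((1 : ℝ) / 2) + r) := by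
  set L := 2 * (1 + ρ ^ 2) ^ ((1 : ℝ) / 2) + r
  have hlog2 : 0 < Real.log 2 := Real.log_pos one_lt_two
  have h1 : Real.log (1 + (ρ - r) ^ 2 + ρ * r) / (2 * Real.log 2) ≤ Real.log L / Real.log 2 := by
    rw [div_le_div_iff₀ (by positivity) hlog2]
    nlinarith [log_one_add_sub_sq_add_mul_le hρ hr]
  have h2 : 1 ≤ Real.log L / Real.log 2 :=
    (one_le_div hlog2).mpr (Real.log_le_log two_pos (two_le_two_mul_rpow_add hr))
  calc _ ≤ Real.log L / Real.log 2 + (1 + c) * (Real.log L / Real.log 2) := by nlinarith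
    _ = (2 + c) / Real.log 2 * Real.log L := by ring

theorem exists_Jnu_le_of_lt {n : ℕ} (hn : 2 ≤ n) {ν : ℝ} (hν : 0 ≤ ν) (hνn : ν < (n : ℝ) - 1) :
    ∃ C : ℝ, 0 < C ∧ ∀ (x : EuclideanSpace ℝ (Fin n)) (ρ : ℝ), 0 ≤ ρ →
      Jnu n ν x ρ ≤ C * (1 + (ρ + ‖x‖) ^ 2) ^ (-ν / 2) := by
  obtain ⟨C, hC, hJ⟩ := exists_Jnu_le_tsum_dyadicTerm hn hν
  set M : ℝ := 2 ^ ((n : ℝ) - 1) * (1 - 2 ^ (ν - ((n : ℝ) - 1)))⁻¹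
  have hM : 0 ≤ M := mul_nonneg (by positivity) (inv_nonneg.mpr (sub_nonneg.mpr
    (Real.rpow_le_one_of_one_le_of_nonpos one_le_two (by linarith))))
  refine ⟨C * M * 2 ^ ν + 1, by positivity, fun x ρ hρ => ?_⟩
  calc Jnu n ν x ρ ≤ C * (M * (1 + (ρ - ‖x‖) ^ 2 + ρ * ‖x‖) ^ (-ν / 2)) :=
        (hJ x ρ hρ).trans <| mul_le_mul_of_nonneg_left (tsum_dyadicTerm_le_of_lt hν hνn
          (by positivity) (mul_nonneg hρ (norm_nonneg x))) hC
    _ ≤ C * (M * (2 ^ ν * (1 + (ρ + ‖x‖) ^ 2) ^ (-ν / 2))) := by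
        gcongr
        exact one_add_sub_sq_add_mul_rpow_le hν ρ ‖x‖
    _ ≤ (C * M * 2 ^ ν + 1) * (1 + (ρ + ‖x‖) ^ 2) ^ (-ν / 2) := by
        rw [add_mul, ← mul_assoc, ← mul_assoc, ← mul_assoc]
        exact le_add_of_nonneg_right (by positivity)

theorem exists_Jnu_le_mul_log_of_eq {n : ℕ} (hn : 2 ≤ n) {ν : ℝ} (hνn : ν = (n : ℝ) - 1) :
    ∃ C : ℝ, 0 < C ∧ ∀ (x : EuclideanSpace ℝ (Fin n)) (ρ : ℝ), 0 ≤ ρ →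
      Jnu n ν x ρ ≤ C * (1 + (ρ + ‖x‖) ^ 2) ^ (-ν / 2) *
        Real.log (2 * (1 + ρ ^ 2) ^ ((1 : ℝ) / 2) + ‖x‖) := by
  have hν : 0 < ν := by
    have : (2 : ℝ) ≤ n := by exact_mod_cast hn
    linarith
  obtain ⟨C, hC, hJ⟩ := exists_Jnu_le_tsum_dyadicTerm hn hν.le
  rw [← hνn] at hJ
  set c : ℝ := (1 - (1 / 2) ^ ν)⁻¹
  have hc : 0 ≤ c :=
    inv_nonneg.mpr (sub_nonneg.mpr (Real.rpow_le_one (by norm_num) (by norm_num) hν.le))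
  set K : ℝ := (2 + c) / Real.log 2
  refine ⟨C * 2 ^ ν * 2 ^ ν * K + 1, by positivity, fun x ρ hρ => ?_⟩
  set L := 2 * (1 + ρ ^ 2) ^ ((1 : ℝ) / 2) + ‖x‖
  set P := 1 + (ρ - ‖x‖) ^ 2 + ρ * ‖x‖
  set Y := (1 + (ρ + ‖x‖) ^ 2) ^ (-ν / 2)
  have hP : 1 ≤ P := by nlinarith [mul_nonneg hρ (norm_nonneg x), sq_nonneg (ρ - ‖x‖)]
  have hL : 0 ≤ Real.log L :=
    Real.log_nonneg (by linarith [two_le_two_mul_rpow_add (ρ := ρ) (norm_nonneg x)])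
  calc Jnu n ν x ρ ≤ C * (2 ^ ν * P ^ (-ν / 2) * (Real.log P / (2 * Real.log 2) + 1 + c)) :=
        (hJ x ρ hρ).trans <| mul_le_mul_of_nonneg_left
          (tsum_dyadicTerm_self_le hν (le_add_of_nonneg_right (sq_nonneg _))
            (mul_nonneg hρ (norm_nonneg x))) hC
    _ ≤ C * (2 ^ ν * (2 ^ ν * Y) * (K * Real.log L)) := by
        gcongr
        · exact add_nonneg (add_nonneg (div_nonneg (Real.log_nonneg hP) (by positivity))
            zero_le_one) hc
        · exact one_add_sub_sq_add_mul_rpow_le hν.le ρ ‖x‖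
        · exact log_div_add_le_mul_log hρ (norm_nonneg x) hc
    _ ≤ (C * 2 ^ ν * 2 ^ ν * K + 1) * Y * Real.log L := by
        have : 0 ≤ Y * Real.log L := mul_nonneg (by positivity) hL
        nlinarith

/-- The global upper bounds for `J_ν` stated at the end of Lemma 2.2 of the paper. -/
theorem Jnu_upper_bounds (n : ℕ) (hn : 2 ≤ n) (ν : ℝ) (hν : 0 < ν) :
    ∃ C : ℝ, 0 < C ∧
      (ν < (n : ℝ) - 1 →
        ∀ (x : EuclideanSpace ℝ (Fin n)) (ρ : ℝ), 0 ≤ ρ →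
          Jnu n ν x ρ ≤ C * (1 + (ρ + ‖x‖) ^ 2) ^ (-ν / 2)) ∧
      (ν = (n : ℝ) - 1 →
        ∀ (x : EuclideanSpace ℝ (Fin n)) (ρ : ℝ), 0 ≤ ρ →
          Jnu n ν x ρ ≤ C * (1 + (ρ + ‖x‖) ^ 2) ^ (-ν / 2) *
            Real.log (2 * (1 + ρ ^ 2) ^ ((1 : ℝ) / 2) + ‖x‖)) := by
  rcases lt_trichotomy ν ((n : ℝ) - 1) with hlt | heq | hgt
  · obtain ⟨C, hC, hJ⟩ := exists_Jnu_le_of_lt hn hν.le hlt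
    exact ⟨C, hC, fun _ => hJ, fun h => absurd h hlt.ne⟩
  · obtain ⟨C, hC, hJ⟩ := exists_Jnu_le_mul_log_of_eq hn heq
    exact ⟨C, hC, fun h => absurd heq h.ne, fun _ => hJ⟩
  · exact ⟨1, one_pos, fun h => absurd h hgt.not_gt, fun h => absurd h hgt.ne'⟩
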